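/- (Lemma 9 of the paper, recurrence for longest matching suffixes.) Let ≈ be an SCER on strings over Σ, f a prefix encoding with respect to ≈, D a dictionary, and T a text. For 0 ≤ i ≤ |T|, let L(i) be the largest length s ≥ 0 such that f(T[i−s+1:i]) ∈ Pref(f(D)), and let V(i) = f(T[i−L(i)+1:i]) be the corresponding state. Then for every 1 ≤ i ≤ |T| with L(i) ≥ 1, there exists q ≥ 0 such that Fail^q(V(i−1)) = f(T[i−L(i)+1:i−1]); that is, the parent of the longest-suffix state at position i occurs in the failure chain of the longest-suffix state at position i−1. -/

import Mathlib

/-- The substring `X[i:j]` (1-indexed, inclusive; `ε` when `j < i`). -/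
def seg {σ : Type*} (X : List σ) (i j : ℕ) : List σ := (X.take j).drop (i - 1)

/-- `Pref(f(D))`: the set of all prefixes (including `ε`) of the encoded
patterns; these are the states of the SCER automaton of `D`. -/
def PrefSet {σ π : Type*} (f : List σ → List π) (D : Finset (List σ)) :
    Set (List π) :=
  {S | ∃ P ∈ D, S <+: f P}

/-- The index `i = min {l | 1 < l ≤ j + 1, f(P[l:j]) ∈ Pref(f(D))}` used in the
definition of the failure function. -/
noncomputable def failIdx {σ π : Type*} (f : List σ → List π)
    (D : Finset (List σ)) (P : List σ) (j : ℕ) : ℕ :=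
  sInf {l | 1 < l ∧ l ≤ j + 1 ∧ f (seg P l j) ∈ PrefSet f D}

/-- `L(i)`: the largest length `s ≥ 0` of a suffix `T[i-s+1:i]` of `T[:i]`
whose encoding lies in `Pref(f(D))`. -/
noncomputable def Llen {σ π : Type*} (f : List σ → List π)
    (D : Finset (List σ)) (T : List σ) (i : ℕ) : ℕ :=
  sSup {s | s ≤ i ∧ f (seg T (i - s + 1) i) ∈ PrefSet f D}

/-- `V(i) = f(T[i-L(i)+1:i])`: the state corresponding to the longest suffix of
`T[:i]` whose encoding is in `Pref(f(D))`. -/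
noncomputable def Vstate {σ π : Type*} (f : List σ → List π)
    (D : Finset (List σ)) (T : List σ) (i : ℕ) : List π :=
  f (seg T (i - Llen f D T i + 1) i)

/-!
The failure function sends a state `f W` to the encoding of the longest proper suffix of `W`
whose encoding is again a state: since `f` is a prefix encoding and `≈` is substring consistent,
the suffixes of `W` and of the pattern prefix `P[:|W|]` with `f W = f(P[:|W|])` have the same
encodings. Hence, along the suffixes of `T[:i-1]`, the failure chain starting at the longest
state `V(i-1)` passes through every shorter suffix whose encoding is a state. The parent
`f(T[i-L(i)+1:i-1])` of `V(i)` is such a suffix, as states are closed under prefixes.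
-/

section Segments

variable {σ : Type*}

theorem seg_eq_nil_of_lt (X : List σ) {l j : ℕ} (h : j < l) : seg X l j = [] := by
  simp only [seg, List.drop_eq_nil_iff, List.length_take]
  omega

theorem length_seg (X : List σ) (l j : ℕ) : (seg X l j).length = min j X.length - (l - 1) := by
  simp [seg]

theorem seg_seg (X : List σ) {a b l j : ℕ} (ha : 1 ≤ a) (hl : 1 ≤ l) (hj : a - 1 + j ≤ b) :
    seg (seg X a b) l j = seg X (a + l - 1) (a - 1 + j) := by
  simp only [seg, List.take_drop, List.take_take, List.drop_drop]
  congr 1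
  · omega
  · congr 1; omega

theorem take_seg (X : List σ) {a b k : ℕ} (hk : a - 1 + k ≤ b) :
    (seg X a b).take k = seg X a (a - 1 + k) := by
  simp only [seg, List.take_drop, List.take_take]
  congr 2; omega

theorem seg_take_self (X : List σ) (l j : ℕ) : seg (X.take j) l j = seg X l j := by
  simp [seg, List.take_take]

end Segments

section Encoding

variable {σ π : Type*} {f : List σ → List π}

theorem encode_nil (hf1 : ∀ X, (f X).length = X.length) : f [] = [] :=
  List.length_eq_zero_iff.mp (hf1 [])

theorem encode_seg_eq_of_encode_eq {R : List σ → List σ → Prop}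
    (hsub : ∀ X Y, R X Y → ∀ i j, 1 ≤ i → i ≤ j → j ≤ X.length →
      R (seg X i j) (seg Y i j))
    (hf3 : ∀ X Y, f X = f Y ↔ R X Y) {X Y : List σ} (h : f X = f Y) {l j : ℕ} (hl : 1 ≤ l)
    (hj : j ≤ X.length) :
    f (seg X l j) = f (seg Y l j) := by
  rcases lt_or_ge j l with hjl | hlj
  · rw [seg_eq_nil_of_lt X hjl, seg_eq_nil_of_lt Y hjl]
  · exact (hf3 _ _).mpr (hsub X Y ((hf3 X Y).mp h) l j hl hlj hj)

variable {D : Finset (List σ)}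

theorem nil_mem_PrefSet {S : List π} (hS : S ∈ PrefSet f D) : [] ∈ PrefSet f D :=
  let ⟨P, hP, _⟩ := hS
  ⟨P, hP, List.nil_prefix⟩

theorem encode_take_mem_PrefSet (hf1 : ∀ X, (f X).length = X.length)
    (hf2 : ∀ (X : List σ) (i : ℕ), 1 ≤ i → i ≤ X.length → f (X.take i) = (f X).take i)
    {X : List σ} (hX : f X ∈ PrefSet f D) (k : ℕ) : f (X.take k) ∈ PrefSet f D := by
  rcases Nat.eq_zero_or_pos k with rfl | hk
  · simpa [encode_nil hf1] using nil_mem_PrefSet hX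
  rcases le_total X.length k with hXk | hkX
  · rwa [List.take_of_length_le hXk]
  obtain ⟨P, hP, hpre⟩ := hX
  exact ⟨P, hP, hf2 X k hk hkX ▸ (List.take_prefix k _).trans hpre⟩

theorem exists_fail_encode_eq_seg {R : List σ → List σ → Prop}
    (hsub : ∀ X Y, R X Y → ∀ i j, 1 ≤ i → i ≤ j → j ≤ X.length →
      R (seg X i j) (seg Y i j))
    (hf1 : ∀ X, (f X).length = X.length)
    (hf2 : ∀ (X : List σ) (i : ℕ), 1 ≤ i → i ≤ X.length → f (X.take i) = (f X).take i)
    (hf3 : ∀ X Y, f X = f Y ↔ R X Y)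
    {Fail : List π → List π}
    (hFail : ∀ P ∈ D, ∀ j : ℕ, 1 ≤ j → j ≤ P.length →
      Fail ((f P).take j) = f (seg P (failIdx f D P j) j))
    {W : List σ} (hW : f W ∈ PrefSet f D) (hW0 : W ≠ []) :
    ∃ m, IsLeast {l | 1 < l ∧ l ≤ W.length + 1 ∧ f (seg W l W.length) ∈ PrefSet f D} m ∧
      Fail (f W) = f (seg W m W.length) := by
  set s := W.length
  have hs : 1 ≤ s := List.length_pos_iff.mpr hW0
  obtain ⟨P, hP, hWP⟩ := hW
  have hsP : s ≤ P.length := by simpa [hf1] using hWP.length_le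
  have hWtake : f W = (f P).take s := by
    rw [List.prefix_iff_eq_take.mp hWP, hf1]
  have hsuf : ∀ l, 1 ≤ l → f (seg W l s) = f (seg P l s) := fun l hl => by
    rw [encode_seg_eq_of_encode_eq hsub hf3 (hWtake.trans (hf2 P s hs hsP).symm) hl le_rfl,
      seg_take_self]
  have hsets : {l | 1 < l ∧ l ≤ s + 1 ∧ f (seg P l s) ∈ PrefSet f D} =
      {l | 1 < l ∧ l ≤ s + 1 ∧ f (seg W l s) ∈ PrefSet f D} := by
    ext l
    exact and_congr_right fun hl => by rw [hsuf l hl.le]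
  have hne : {l | 1 < l ∧ l ≤ s + 1 ∧ f (seg W l s) ∈ PrefSet f D}.Nonempty :=
    ⟨s + 1, by omega, le_rfl, by
      rw [seg_eq_nil_of_lt W (Nat.lt_succ_self s), encode_nil hf1]
      exact nil_mem_PrefSet ⟨P, hP, hWP⟩⟩
  have hidx :
      failIdx f D P s = sInf {l | 1 < l ∧ l ≤ s + 1 ∧ f (seg W l s) ∈ PrefSet f D} := by
    rw [failIdx, hsets]
  have hleast := isLeast_csInf hne
  refine ⟨_, hleast, ?_⟩
  rw [hWtake, hFail P hP s hs hsP, hidx, hsuf _ hleast.1.1.le]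

end Encoding

section Suffixes

variable {σ π : Type*} {f : List σ → List π} {D : Finset (List σ)} {T : List σ} {n : ℕ}

theorem le_Llen {s : ℕ} (hsn : s ≤ n) (hs : f (seg T (n - s + 1) n) ∈ PrefSet f D) :
    s ≤ Llen f D T n :=
  le_csSup ⟨n, fun _ h => h.1⟩ ⟨hsn, hs⟩

theorem Llen_mem (hne : ∃ s ≤ n, f (seg T (n - s + 1) n) ∈ PrefSet f D) :
    Llen f D T n ≤ n ∧ f (seg T (n - Llen f D T n + 1) n) ∈ PrefSet f D :=
  Nat.sSup_mem hne ⟨n, fun _ h => h.1⟩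

theorem Llen_mem_of_pos (h : 0 < Llen f D T n) :
    Llen f D T n ≤ n ∧ f (seg T (n - Llen f D T n + 1) n) ∈ PrefSet f D := by
  refine Llen_mem (by_contra fun hne => h.ne' ?_)
  have he : {s | s ≤ n ∧ f (seg T (n - s + 1) n) ∈ PrefSet f D} = ∅ :=
    Set.eq_empty_of_forall_notMem fun s hs => hne ⟨s, hs⟩
  rw [Llen, he, csSup_empty, Nat.bot_eq_zero]

theorem exists_fail_suffix_eq {R : List σ → List σ → Prop}
    (hsub : ∀ X Y, R X Y → ∀ i j, 1 ≤ i → i ≤ j → j ≤ X.length →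
      R (seg X i j) (seg Y i j))
    (hf1 : ∀ X, (f X).length = X.length)
    (hf2 : ∀ (X : List σ) (i : ℕ), 1 ≤ i → i ≤ X.length → f (X.take i) = (f X).take i)
    (hf3 : ∀ X Y, f X = f Y ↔ R X Y)
    {Fail : List π → List π}
    (hFail : ∀ P ∈ D, ∀ j : ℕ, 1 ≤ j → j ≤ P.length →
      Fail ((f P).take j) = f (seg P (failIdx f D P j) j))
    (hn : n ≤ T.length) {s : ℕ} (hs1 : 1 ≤ s) (hsn : s ≤ n)
    (hs : f (seg T (n - s + 1) n) ∈ PrefSet f D) :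
    ∃ s', IsGreatest {t | t < s ∧ f (seg T (n - t + 1) n) ∈ PrefSet f D} s' ∧
      Fail (f (seg T (n - s + 1) n)) = f (seg T (n - s' + 1) n) := by
  set W := seg T (n - s + 1) n
  have hWlen : W.length = s := by rw [length_seg]; omega
  have hsufW : ∀ l, 1 ≤ l → l ≤ s + 1 → seg W l s = seg T (n - (s + 1 - l) + 1) n :=
    fun l hl hls => by rw [seg_seg T (by omega) hl (by omega)]; congr 1 <;> omega
  obtain ⟨m, ⟨⟨hm1, hms, hm⟩, hmin⟩, hfail⟩ :=
    exists_fail_encode_eq_seg hsub hf1 hf2 hf3 hFail hs (List.ne_nil_of_length_pos (by omega))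
  rw [hWlen] at hms hm hmin hfail
  refine ⟨s + 1 - m, ⟨⟨by omega, hsufW m hm1.le hms ▸ hm⟩, fun t ⟨hts, ht⟩ => ?_⟩,
    by rw [hfail, hsufW m hm1.le hms]⟩
  have hsuft : seg W (s + 1 - t) s = seg T (n - t + 1) n := by
    rw [hsufW _ (by omega) (by omega), Nat.sub_sub_self (by omega)]
  have := hmin ⟨by omega, by omega, hsuft ▸ ht⟩
  omega

theorem exists_iterate_fail_suffix_eq {R : List σ → List σ → Prop}
    (hsub : ∀ X Y, R X Y → ∀ i j, 1 ≤ i → i ≤ j → j ≤ X.length →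
      R (seg X i j) (seg Y i j))
    (hf1 : ∀ X, (f X).length = X.length)
    (hf2 : ∀ (X : List σ) (i : ℕ), 1 ≤ i → i ≤ X.length → f (X.take i) = (f X).take i)
    (hf3 : ∀ X Y, f X = f Y ↔ R X Y)
    {Fail : List π → List π}
    (hFail : ∀ P ∈ D, ∀ j : ℕ, 1 ≤ j → j ≤ P.length →
      Fail ((f P).take j) = f (seg P (failIdx f D P j) j))
    (hn : n ≤ T.length) {s t : ℕ} (hsn : s ≤ n) (hs : f (seg T (n - s + 1) n) ∈ PrefSet f D)
    (hts : t ≤ s) (ht : f (seg T (n - t + 1) n) ∈ PrefSet f D) :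
    ∃ q, Fail^[q] (f (seg T (n - s + 1) n)) = f (seg T (n - t + 1) n) := by
  induction s using Nat.strong_induction_on with
  | _ s ih =>
    rcases hts.eq_or_lt with rfl | hlt
    · exact ⟨0, rfl⟩
    obtain ⟨s', ⟨⟨hs's, hs'⟩, hmax⟩, hfail⟩ :=
      exists_fail_suffix_eq hsub hf1 hf2 hf3 hFail hn (by omega) hsn hs
    obtain ⟨q, hq⟩ := ih s' hs's (by omega) hs' (hmax ⟨hlt, ht⟩)
    exact ⟨q + 1, by rw [Function.iterate_succ_apply, hfail, hq]⟩

end Suffixes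

theorem longest_suffix_recurrence_general {σ π : Type*} (R : List σ → List σ → Prop)
    (hsub : ∀ X Y, R X Y → ∀ i j, 1 ≤ i → i ≤ j → j ≤ X.length →
      R (seg X i j) (seg Y i j))
    (f : List σ → List π)
    (hf1 : ∀ X, (f X).length = X.length)
    (hf2 : ∀ (X : List σ) (i : ℕ), 1 ≤ i → i ≤ X.length →
      f (X.take i) = (f X).take i)
    (hf3 : ∀ X Y, f X = f Y ↔ R X Y)
    (D : Finset (List σ))
    (Fail : List π → List π)
    (hFail : ∀ P ∈ D, ∀ j : ℕ, 1 ≤ j → j ≤ P.length →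
      Fail ((f P).take j) = f (seg P (failIdx f D P j) j))
    (T : List σ) (i : ℕ) (hiT : i ≤ T.length)
    (hL : 1 ≤ Llen f D T i) :
    ∃ q : ℕ, Fail^[q] (Vstate f D T (i - 1)) =
      f (seg T (i - Llen f D T i + 1) (i - 1)) := by
  set L := Llen f D T i
  obtain ⟨hLi, hLmem⟩ := Llen_mem_of_pos hL
  have hparent : f (seg T (i - 1 - (L - 1) + 1) (i - 1)) ∈ PrefSet f D := by
    have h := encode_take_mem_PrefSet hf1 hf2 hLmem (L - 1)
    rwa [take_seg T (by omega), show i - L + 1 - 1 + (L - 1) = i - 1 by omega,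
      show i - L + 1 = i - 1 - (L - 1) + 1 by omega] at h
  obtain ⟨hL'i, hL'mem⟩ := Llen_mem ⟨L - 1, by omega, hparent⟩
  obtain ⟨q, hq⟩ := exists_iterate_fail_suffix_eq hsub hf1 hf2 hf3 hFail (by omega) hL'i hL'mem
    (le_Llen (by omega) hparent) hparent
  refine ⟨q, ?_⟩
  rw [Vstate, hq, show i - 1 - (L - 1) + 1 = i - L + 1 by omega]

/-- Lemma 9 (recurrence for longest matching suffixes).  Let `R` be an SCER,
`f` a prefix encoding w.r.t. `R`, `D` a dictionary, `T` a text, and `Fail` the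
failure function of the SCER automaton, extended by `Fail ε = ε`.  For every
`1 ≤ i ≤ |T|` with `L(i) ≥ 1`, there exists `q ≥ 0` such that
`Fail^q(V(i-1)) = f(T[i-L(i)+1:i-1])`; that is, the parent of the
longest-suffix state at position `i` occurs in the failure chain of the
longest-suffix state at position `i-1`. -/
theorem longest_suffix_recurrence {σ π : Type*} (R : List σ → List σ → Prop)
    (hequiv : Equivalence R)
    (hlen : ∀ X Y, R X Y → X.length = Y.length)
    (hsub : ∀ X Y, R X Y → ∀ i j, 1 ≤ i → i ≤ j → j ≤ X.length →
      R (seg X i j) (seg Y i j))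
    (f : List σ → List π)
    (hf1 : ∀ X, (f X).length = X.length)
    (hf2 : ∀ (X : List σ) (i : ℕ), 1 ≤ i → i ≤ X.length →
      f (X.take i) = (f X).take i)
    (hf3 : ∀ X Y, f X = f Y ↔ R X Y)
    (D : Finset (List σ))
    (Fail : List π → List π)
    (hFail : ∀ P ∈ D, ∀ j : ℕ, 1 ≤ j → j ≤ P.length →
      Fail ((f P).take j) = f (seg P (failIdx f D P j) j))
    (hFailNil : Fail [] = [])
    (T : List σ) (i : ℕ) (hi : 1 ≤ i) (hiT : i ≤ T.length)
    (hL : 1 ≤ Llen f D T i) :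
    ∃ q : ℕ, Fail^[q] (Vstate f D T (i - 1)) =
      f (seg T (i - Llen f D T i + 1) (i - 1)) :=
  longest_suffix_recurrence_general R hsub f hf1 hf2 hf3 D Fail hFail T i hiT hL
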